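/- Let C be a polygonal curve with vertices p_0, …, p_m and L(C) > 0. Then consecutive vertices of the arclength respacing f(C) satisfy ‖f(p_k) − f(p_{k−1})‖ ≤ L(C)/m for every k = 1, …, m. -/

import Mathlib

open Finset Filter

noncomputable section

/-- The length of the polygonal curve with vertices `p 0, …, p m`
(also the arclength distance from `p 0` to `p m` along the curve). -/
def polyLength {dim : ℕ} (p : ℕ → EuclideanSpace ℝ (Fin dim)) (m : ℕ) : ℝ :=
  ∑ i ∈ Finset.range m, ‖p (i + 1) - p i‖

/-- `P` is the arclength-parameterized linear interpolation of the polygonal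
curve with vertices `p 0, …, p m`:
`P ((1-t)·d_{k-1} + t·d_k) = (1-t)·p_{k-1} + t·p_k` for `t ∈ [0,1]`, `k = 1, …, m`,
where `d_k = polyLength p k` is the arclength up to vertex `k`. -/
def IsArcParam {dim : ℕ} (p : ℕ → EuclideanSpace ℝ (Fin dim)) (m : ℕ)
    (P : ℝ → EuclideanSpace ℝ (Fin dim)) : Prop :=
  ∀ k : ℕ, 1 ≤ k → k ≤ m → ∀ t : ℝ, 0 ≤ t → t ≤ 1 →
    P ((1 - t) * polyLength p (k - 1) + t * polyLength p k)
      = (1 - t) • p (k - 1) + t • p k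

/-- The polygonal curve with vertices `p 0, …, p m` is equilateral:
all consecutive interpoint distances agree. -/
def IsEquilateral {dim : ℕ} (p : ℕ → EuclideanSpace ℝ (Fin dim)) (m : ℕ) : Prop :=
  ∀ k l : ℕ, 1 ≤ k → k ≤ m → 1 ≤ l → l ≤ m →
    ‖p k - p (k - 1)‖ = ‖p l - p (l - 1)‖

/-- `q 0, …, q m` are the vertices of the arclength respacing `f(C)` of the
polygonal curve `C` with vertices `p 0, …, p m`:
`q k = P (k·L(C)/m)` where `P` is the arclength parameterization of `C`;
by convention `f(C) := C` when `L(C) = 0`. -/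
def Respaces {dim : ℕ} (m : ℕ) (p q : ℕ → EuclideanSpace ℝ (Fin dim)) : Prop :=
  (polyLength p m = 0 ∧ ∀ k ≤ m, q k = p k) ∨
  (0 < polyLength p m ∧ ∃ P : ℝ → EuclideanSpace ℝ (Fin dim), IsArcParam p m P ∧
    ∀ k ≤ m, q k = P ((k : ℝ) * polyLength p m / m))

open scoped NNReal

/-! The arclength parameterization `P` moves along the segment `[p k, p (k+1)]` at unit speed
while its parameter runs through `[d k, d (k+1)]`, so it is `1`-Lipschitz on each of these
intervals and hence, gluing them, on all of `[0, L(C)]`. Consecutive vertices of the respacing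
are values of `P` at parameters `L(C)/m` apart. -/

lemma Set.Subsingleton.lipschitzOnWith {α β : Type*} [PseudoEMetricSpace α]
    [PseudoEMetricSpace β] {s : Set α} (hs : s.Subsingleton) (K : ℝ≥0) (f : α → β) :
    LipschitzOnWith K f s := fun x hx y hy => by
  rw [hs hx hy, edist_self, edist_self, mul_zero]

lemma LipschitzOnWith.Icc_union_Icc {E : Type*} [PseudoMetricSpace E] {f : ℝ → E} {K : ℝ≥0}
    {a b c : ℝ} (hab : LipschitzOnWith K f (Set.Icc a b))
    (hbc : LipschitzOnWith K f (Set.Icc b c)) :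
    LipschitzOnWith K f (Set.Icc a b ∪ Set.Icc b c) := by
  refine LipschitzOnWith.of_dist_le_mul fun x hx y hy => ?_
  wlog hxy : x ≤ y generalizing x y
  · rw [dist_comm, dist_comm x]
    exact this y hy x hx (le_of_not_ge hxy)
  rcases hx with hx | hx <;> rcases hy with hy | hy
  · exact hab.dist_le_mul x hx y hy
  · calc dist (f x) (f y) ≤ dist (f x) (f b) + dist (f b) (f y) := dist_triangle _ _ _
      _ ≤ K * dist x b + K * dist b y :=
          add_le_add (hab.dist_le_mul x hx b ⟨hx.1.trans hx.2, le_rfl⟩)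
            (hbc.dist_le_mul b ⟨le_rfl, hy.1.trans hy.2⟩ y hy)
      _ = K * dist x y := by
          rw [Real.dist_eq, Real.dist_eq, Real.dist_eq, abs_of_nonpos (by linarith [hx.2]),
            abs_of_nonpos (by linarith [hy.1]), abs_of_nonpos (by linarith)]
          ring
  · obtain rfl : x = y := by linarith [hx.1, hy.2]
    simp
  · exact hbc.dist_le_mul x hx y hy

lemma polyLength_zero {dim : ℕ} (p : ℕ → EuclideanSpace ℝ (Fin dim)) : polyLength p 0 = 0 :=
  Finset.sum_range_zero _

lemma polyLength_succ {dim : ℕ} (p : ℕ → EuclideanSpace ℝ (Fin dim)) (k : ℕ) :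
    polyLength p (k + 1) = polyLength p k + ‖p (k + 1) - p k‖ :=
  Finset.sum_range_succ _ _

lemma polyLength_nonneg {dim : ℕ} (p : ℕ → EuclideanSpace ℝ (Fin dim)) (k : ℕ) :
    0 ≤ polyLength p k :=
  Finset.sum_nonneg fun _ _ => norm_nonneg _

lemma polyLength_le_succ {dim : ℕ} (p : ℕ → EuclideanSpace ℝ (Fin dim)) (k : ℕ) :
    polyLength p k ≤ polyLength p (k + 1) := by
  rw [polyLength_succ]
  exact le_add_of_nonneg_right (norm_nonneg _)

namespace IsArcParam

variable {dim m : ℕ} {p : ℕ → EuclideanSpace ℝ (Fin dim)} {P : ℝ → EuclideanSpace ℝ (Fin dim)}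

lemma apply_of_mem_Icc (hP : IsArcParam p m P) {k : ℕ} (hk : k + 1 ≤ m)
    (hne : p (k + 1) ≠ p k) {x : ℝ} (hx : x ∈ Set.Icc (polyLength p k) (polyLength p (k + 1))) :
    P x = p k + ((x - polyLength p k) / ‖p (k + 1) - p k‖) • (p (k + 1) - p k) := by
  have hc : 0 < ‖p (k + 1) - p k‖ := norm_pos_iff.mpr (sub_ne_zero.mpr hne)
  rw [polyLength_succ] at hx
  set t := (x - polyLength p k) / ‖p (k + 1) - p k‖ with ht
  have ht0 : 0 ≤ t := div_nonneg (by linarith [hx.1]) hc.le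
  have ht1 : t ≤ 1 := (div_le_one hc).mpr (by linarith [hx.2])
  have hxt : x = (1 - t) * polyLength p k + t * polyLength p (k + 1) := by
    rw [ht, polyLength_succ]
    field_simp
    ring
  have hseg := hP (k + 1) (by omega) hk t ht0 ht1
  rw [Nat.add_sub_cancel] at hseg
  rw [hxt, hseg]
  module

lemma lipschitzOnWith_Icc_polyLength_succ (hP : IsArcParam p m P) {k : ℕ} (hk : k + 1 ≤ m) :
    LipschitzOnWith 1 P (Set.Icc (polyLength p k) (polyLength p (k + 1))) := by
  by_cases hne : p (k + 1) = p k
  · rw [polyLength_succ, hne, sub_self, norm_zero, add_zero, Set.Icc_self]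
    exact Set.subsingleton_singleton.lipschitzOnWith 1 P
  refine LipschitzOnWith.mk_one fun x hx y hy => ?_
  have hc : 0 < ‖p (k + 1) - p k‖ := norm_pos_iff.mpr (sub_ne_zero.mpr hne)
  rw [hP.apply_of_mem_Icc hk hne hx, hP.apply_of_mem_Icc hk hne hy, dist_add_left,
    dist_eq_norm, ← sub_smul, norm_smul, ← sub_div, sub_sub_sub_cancel_right, norm_div,
    Real.norm_eq_abs, norm_norm, div_mul_cancel₀ _ hc.ne', Real.dist_eq]

lemma lipschitzOnWith_Icc_zero_polyLength (hP : IsArcParam p m P) {k : ℕ} (hk : k ≤ m) :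
    LipschitzOnWith 1 P (Set.Icc 0 (polyLength p k)) := by
  induction k with
  | zero =>
    rw [polyLength_zero, Set.Icc_self]
    exact Set.subsingleton_singleton.lipschitzOnWith 1 P
  | succ k ih =>
    rw [← Set.Icc_union_Icc_eq_Icc (polyLength_nonneg p k) (polyLength_le_succ p k)]
    exact (ih (by omega)).Icc_union_Icc (hP.lipschitzOnWith_Icc_polyLength_succ hk)

end IsArcParam

theorem stmt11_general {dim m : ℕ} (p : ℕ → EuclideanSpace ℝ (Fin dim))
    (P : ℝ → EuclideanSpace ℝ (Fin dim)) (hP : IsArcParam p m P)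
    (q : ℕ → EuclideanSpace ℝ (Fin dim))
    (hq : ∀ k ≤ m, q k = P ((k : ℝ) * polyLength p m / m)) :
    ∀ k : ℕ, 1 ≤ k → k ≤ m →
      ‖q k - q (k - 1)‖ ≤ polyLength p m / m := by
  intro k hk1 hkm
  set L := polyLength p m
  have hm : (0 : ℝ) < m := by exact_mod_cast hk1.trans hkm
  have hL : 0 ≤ L := polyLength_nonneg p m
  have hmem : ∀ j ≤ m, (j : ℝ) * L / m ∈ Set.Icc 0 L := fun j hj =>
    ⟨by positivity, (div_le_iff₀ hm).mpr (by rw [mul_comm]; gcongr)⟩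
  rw [hq k hkm, hq (k - 1) (by omega), ← dist_eq_norm]
  calc dist (P (k * L / m)) (P ((k - 1 : ℕ) * L / m))
      ≤ 1 * dist ((k : ℝ) * L / m) ((k - 1 : ℕ) * L / m) :=
        (hP.lipschitzOnWith_Icc_zero_polyLength le_rfl).dist_le_mul _ (hmem k hkm) _
          (hmem (k - 1) (by omega))
    _ = L / m := by
        rw [Nat.cast_pred hk1, one_mul, Real.dist_eq, ← sub_div, ← sub_mul, sub_sub_cancel,
          one_mul, abs_of_nonneg (by positivity)]

/-- Consecutive vertices of the arclength respacing are at distance at most `L(C)/m`. -/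
theorem stmt11 {dim m : ℕ} (hm : 1 ≤ m) (p : ℕ → EuclideanSpace ℝ (Fin dim))
    (hL : 0 < polyLength p m)
    (P : ℝ → EuclideanSpace ℝ (Fin dim)) (hP : IsArcParam p m P)
    (q : ℕ → EuclideanSpace ℝ (Fin dim))
    (hq : ∀ k ≤ m, q k = P ((k : ℝ) * polyLength p m / m)) :
    ∀ k : ℕ, 1 ≤ k → k ≤ m →
      ‖q k - q (k - 1)‖ ≤ polyLength p m / m :=
  stmt11_general p P hP q hq
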